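/- Fix t̂ with 0 < t̂ ≤ τ and let f̂(u) = f_{c,1}(u) for 0 < u ≤ t̂ and f̂(u) = 0 for u > t̂ (negative-feedback release rate). Then the fraction of recyclable molecules satisfies lim_{t→∞} ∫₀^t f̂(u) H(t − u) du + ∫_{t̂}^{τ} f_{c,1}(t) dt + ∫_τ^∞ f_{c,2}(t) dt = C Σ_n c_n [(H_∞ − 1)(t̂ − (1 − exp(−D_v λ_n² t̂))/(D_v λ_n²)) + τ]. (Theorem 4, case t̂ ≤ τ, the fraction χ₁(t̂) = β₁(t→∞) + β₂(t̂).) -/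

import Mathlib

open MeasureTheory Filter Topology

noncomputable def erf (x : ℝ) : ℝ := (2 / Real.sqrt Real.pi) * ∫ u in (0:ℝ)..x, Real.exp (-u ^ 2)

noncomputable def erfc (x : ℝ) : ℝ := 1 - erf x

/-!
For `t ≥ t̂` the convolution only sees `f̂ = f_{c,1}` on `(0, t̂]`, and there `H (t - u) → H_∞`.
Since `H` is continuous on `(0, ∞)` with a finite limit it is bounded on `[1, ∞)`, so dominated
convergence gives the limit `H_∞ ∫₀^t̂ f_{c,1}`. The limit `H_∞` itself comes from `erf → 1` and
the Gaussian tail bound `erfc x ≤ exp (-x²) / (√π x)`, which kills `exp (ζ t) erfc (γ √(D_σ t))`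
because `ζ - γ² D_σ = -k_d < 0`. The three remaining integrals are computed term by term, the
absolute summability of `c` justifying the exchange of sum and integral; the final identity is
then termwise algebra.
-/

open Set Real

lemma integrableOn_exp_neg_sq (s : Set ℝ) : IntegrableOn (fun u : ℝ => exp (-u ^ 2)) s := by
  simpa using (integrable_exp_neg_mul_sq one_pos).integrableOn

lemma integral_exp_neg_sq_Ioi_zero : ∫ u in Ioi (0 : ℝ), exp (-u ^ 2) = √π / 2 := by
  simpa using integral_gaussian_Ioi 1

@[fun_prop]
lemma continuous_erf : Continuous erf :=
  continuous_const.mul <| intervalIntegral.continuous_primitive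
    (fun _ _ => (integrableOn_exp_neg_sq _).intervalIntegrable) 0

@[fun_prop]
lemma continuous_erfc : Continuous erfc := continuous_const.sub continuous_erf

lemma tendsto_erf_atTop : Tendsto erf atTop (𝓝 1) := by
  have h := (intervalIntegral_tendsto_integral_Ioi 0 (integrableOn_exp_neg_sq _)
    tendsto_id).const_mul (2 / √π)
  have hπ : 2 / √π * ∫ u in Ioi (0 : ℝ), exp (-u ^ 2) = 1 := by
    rw [integral_exp_neg_sq_Ioi_zero]
    field_simp
  rwa [hπ] at h

lemma erfc_eq_integral_Ioi (x : ℝ) : erfc x = 2 / √π * ∫ u in Ioi x, exp (-u ^ 2) := by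
  have hsplit := intervalIntegral.integral_interval_add_Ioi (integrableOn_exp_neg_sq (Ioi 0))
    (integrableOn_exp_neg_sq (Ioi x))
  rw [integral_exp_neg_sq_Ioi_zero] at hsplit
  rw [erfc, erf, eq_sub_of_add_eq hsplit]
  field_simp
  ring

lemma erfc_nonneg (x : ℝ) : 0 ≤ erfc x := by
  rw [erfc_eq_integral_Ioi]
  have : 0 ≤ ∫ u in Ioi x, exp (-u ^ 2) :=
    setIntegral_nonneg measurableSet_Ioi fun u _ => (exp_pos _).le
  positivity

lemma erfc_le_exp_neg_sq_div {x : ℝ} (hx : 0 < x) : erfc x ≤ exp (-x ^ 2) / (√π * x) := by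
  -- on `(x, ∞)` we have `-u² ≤ x² - 2xu`
  have hbound : ∫ u in Ioi x, exp (-u ^ 2) ≤ ∫ u in Ioi x, exp (x ^ 2) * exp ((-2 * x) * u) := by
    refine setIntegral_mono_on (integrableOn_exp_neg_sq _) ?_ measurableSet_Ioi fun u _ => ?_
    · exact (by simpa using exp_neg_integrableOn_Ioi x (by positivity : 0 < 2 * x) :
        IntegrableOn (fun u => exp ((-2 * x) * u)) (Ioi x)).const_mul _
    · rw [← exp_add]
      exact exp_le_exp.mpr (by nlinarith [sq_nonneg (u - x)])
  have hint : ∫ u in Ioi x, exp (x ^ 2) * exp ((-2 * x) * u) = exp (-x ^ 2) / (2 * x) := by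
    rw [integral_const_mul, integral_exp_mul_Ioi (by linarith) x, mul_div_assoc',
      mul_neg, ← exp_add]
    field_simp
    ring_nf
  rw [erfc_eq_integral_Ioi]
  calc 2 / √π * ∫ u in Ioi x, exp (-u ^ 2)
      ≤ 2 / √π * (exp (-x ^ 2) / (2 * x)) := by rw [← hint]; gcongr
    _ = exp (-x ^ 2) / (√π * x) := by field_simp

lemma tendsto_exp_mul_erfc_mul_sqrt {γ D k : ℝ} (hγ : 0 < γ) (hD : 0 < D) (hk : 0 < k) :
    Tendsto (fun t => exp ((γ ^ 2 * D - k) * t) * erfc (γ * √(D * t))) atTop (𝓝 0) := by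
  have hx : Tendsto (fun t => γ * √(D * t)) atTop atTop :=
    (tendsto_sqrt_atTop.comp (tendsto_id.const_mul_atTop hD)).const_mul_atTop hγ
  have hdecay : Tendsto (fun t => exp (-(k * t)) * (√π * (γ * √(D * t)))⁻¹) atTop (𝓝 (0 * 0)) :=
    (tendsto_exp_neg_atTop_nhds_zero.comp (tendsto_id.const_mul_atTop hk)).mul
      (hx.const_mul_atTop (sqrt_pos.mpr pi_pos)).inv_tendsto_atTop
  rw [mul_zero] at hdecay
  refine tendsto_of_tendsto_of_tendsto_of_le_of_le' tendsto_const_nhds hdecay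
    (.of_forall fun t => mul_nonneg (exp_pos _).le (erfc_nonneg _)) ?_
  filter_upwards [eventually_gt_atTop 0] with t ht
  have hsq : (γ * √(D * t)) ^ 2 = γ ^ 2 * D * t := by
    rw [mul_pow, sq_sqrt (by positivity)]; ring
  calc exp ((γ ^ 2 * D - k) * t) * erfc (γ * √(D * t))
      ≤ exp ((γ ^ 2 * D - k) * t) * (exp (-(γ * √(D * t)) ^ 2) / (√π * (γ * √(D * t)))) := by
        gcongr; exact erfc_le_exp_neg_sq_div (by positivity)
    _ = exp (-(k * t)) * (√π * (γ * √(D * t)))⁻¹ := by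
        rw [hsq, div_eq_mul_inv, ← mul_assoc, ← exp_add]; ring_nf

noncomputable def responseH (Dσ kd γ ζ w t : ℝ) : ℝ :=
  w / √(kd * Dσ) * erf (√(kd * t)) -
    w * γ / ζ * (exp (ζ * t) * erfc (γ * √(Dσ * t)) + γ * √(Dσ / kd) * erf (√(kd * t)) - 1)

lemma continuous_responseH (Dσ kd γ ζ w : ℝ) : Continuous (responseH Dσ kd γ ζ w) := by
  unfold responseH; fun_prop

lemma tendsto_responseH {Dσ kd γ : ℝ} (hDσ : 0 < Dσ) (hkd : 0 < kd) (hγ : 0 < γ) (w : ℝ) :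
    Tendsto (responseH Dσ kd γ (γ ^ 2 * Dσ - kd) w) atTop
      (𝓝 (w / √(Dσ * kd) - w * γ ^ 2 / (γ ^ 2 * Dσ - kd) * √(Dσ / kd)
        + w * γ / (γ ^ 2 * Dσ - kd))) := by
  have herf : Tendsto (fun t => erf √(kd * t)) atTop (𝓝 1) :=
    tendsto_erf_atTop.comp (tendsto_sqrt_atTop.comp (tendsto_id.const_mul_atTop hkd))
  convert (herf.const_mul (w / √(kd * Dσ))).sub (((tendsto_exp_mul_erfc_mul_sqrt hγ hDσ hkd).add
    (herf.const_mul (γ * √(Dσ / kd)))).sub_const 1 |>.const_mul (w * γ / (γ ^ 2 * Dσ - kd)))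
    using 2
  · rfl
  · rw [mul_comm kd Dσ]; ring

lemma ContinuousOn.exists_bound_Ici_of_tendsto {g : ℝ → ℝ} {a L : ℝ}
    (hg : ContinuousOn g (Ici a)) (hgL : Tendsto g atTop (𝓝 L)) :
    ∃ M, ∀ x ∈ Ici a, |g x| ≤ M := by
  obtain ⟨b, hb⟩ := eventually_atTop.mp <|
    hgL.abs.eventually (eventually_le_nhds (lt_add_one |L|))
  obtain ⟨M, hM⟩ := isCompact_Icc.exists_bound_of_continuousOn
    (hg.mono Icc_subset_Ici_self : ContinuousOn g (Icc a b))
  refine ⟨max M (|L| + 1), fun x hx => ?_⟩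
  rcases le_or_gt x b with hxb | hxb
  · exact (hM x ⟨hx, hxb⟩).trans (le_max_left _ _)
  · exact (hb x hxb.le).trans (le_max_right _ _)

theorem tendsto_setIntegral_mul_comp_sub {f g : ℝ → ℝ} {s : Set ℝ} {T L : ℝ}
    (hs : MeasurableSet s) (hsT : s ⊆ Iic T) (hf : IntegrableOn f s)
    (hg : ContinuousOn g (Ioi 0)) (hgL : Tendsto g atTop (𝓝 L)) :
    Tendsto (fun t => ∫ u in s, f u * g (t - u)) atTop (𝓝 ((∫ u in s, f u) * L)) := by
  obtain ⟨M, hM⟩ := (hg.mono (Ici_subset_Ioi.mpr one_pos)).exists_bound_Ici_of_tendsto hgL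
  rw [← integral_mul_const]
  refine tendsto_integral_filter_of_dominated_convergence (fun u => ‖f u‖ * M) ?_ ?_
    (hf.norm.mul_const M) (.of_forall fun u => ?_)
  · filter_upwards [eventually_gt_atTop T] with t ht
    exact hf.1.mul <| (hg.comp (continuousOn_const.sub continuousOn_id) fun u hu =>
      sub_pos.mpr ((hsT hu).trans_lt ht)).aestronglyMeasurable hs
  · filter_upwards [eventually_ge_atTop (T + 1)] with t ht
    filter_upwards [ae_restrict_mem hs] with u hu
    rw [norm_mul]
    have htu : 1 ≤ t - u := by linarith [mem_Iic.mp (hsT hu)]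
    exact mul_le_mul_of_nonneg_left (hM _ htu) (norm_nonneg _)
  · exact (hgL.comp (tendsto_atTop_add_const_right _ (-u) tendsto_id)).const_mul (f u)

lemma norm_mul_one_sub_exp_neg_le (c : ℝ) {y : ℝ} (hy : 0 ≤ y) : ‖c * (1 - exp (-y))‖ ≤ |c| := by
  have h1 : exp (-y) ≤ 1 := exp_le_one_iff.mpr (neg_nonpos.mpr hy)
  rw [norm_mul, Real.norm_eq_abs, Real.norm_eq_abs, abs_of_nonneg (sub_nonneg.mpr h1)]
  exact mul_le_of_le_one_right (abs_nonneg c) (by linarith [exp_pos (-y)])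

lemma integral_one_sub_exp_neg_mul {a : ℝ} (ha : a ≠ 0) (s T : ℝ) :
    ∫ x in s..T, (1 - exp (-(a * x))) = (T - s) - (exp (-(a * s)) - exp (-(a * T))) / a := by
  have hderiv (x : ℝ) :
      HasDerivAt (fun x => x + exp (-(a * x)) / a) (1 - exp (-(a * x))) x := by
    refine ((hasDerivAt_id' x).fun_add
      (((hasDerivAt_id' x).const_mul a).fun_neg.exp.div_const a)).congr_deriv ?_
    field_simp
    ring
  rw [intervalIntegral.integral_eq_sub_of_hasDerivAt (fun x _ => hderiv x)
    ((by fun_prop : Continuous fun x => 1 - exp (-(a * x))).intervalIntegrable _ _)]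
  ring

lemma exp_neg_mul_sub_sub_exp_neg_mul (a τ x : ℝ) :
    exp (-(a * (x - τ))) - exp (-(a * x)) = (exp (a * τ) - 1) * exp (-a * x) := by
  rw [sub_mul, ← exp_add, one_mul]; ring_nf

lemma integral_Ioi_exp_neg_mul_sub {a : ℝ} (ha : 0 < a) (τ : ℝ) :
    ∫ x in Ioi τ, (exp (-(a * (x - τ))) - exp (-(a * x))) = (1 - exp (-(a * τ))) / a := by
  simp_rw [exp_neg_mul_sub_sub_exp_neg_mul]
  rw [integral_const_mul, integral_exp_mul_Ioi (neg_lt_zero.mpr ha), neg_div_neg_eq,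
    mul_div_assoc', sub_mul, ← exp_add, show a * τ + -a * τ = 0 by ring, exp_zero]
  ring_nf

lemma integrableOn_exp_neg_mul_sub {a : ℝ} (ha : 0 < a) (τ : ℝ) :
    IntegrableOn (fun x => exp (-(a * (x - τ))) - exp (-(a * x))) (Ioi τ) := by
  simp_rw [exp_neg_mul_sub_sub_exp_neg_mul]
  exact (by simpa using exp_neg_integrableOn_Ioi τ ha :
    IntegrableOn (fun x => exp (-a * x)) (Ioi τ)).const_mul _

section Series

variable {ι : Type*} {a c : ι → ℝ}

lemma continuousOn_tsum_mul_one_sub_exp (ha : ∀ n, 0 ≤ a n) (hc : Summable fun n => |c n|) :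
    ContinuousOn (fun x => ∑' n, c n * (1 - exp (-(a n * x)))) (Ici 0) :=
  continuousOn_tsum (fun n => by fun_prop) hc fun n _ hx =>
    norm_mul_one_sub_exp_neg_le _ (mul_nonneg (ha n) hx)

theorem hasSum_intervalIntegral_tsum_mul_one_sub_exp [Countable ι] (ha : ∀ n, 0 < a n)
    (hc : Summable fun n => |c n|) {s T : ℝ} (hs : 0 ≤ s) (hsT : s ≤ T) :
    HasSum (fun n => c n * ((T - s) - (exp (-(a n * s)) - exp (-(a n * T))) / a n))
      (∫ x in s..T, ∑' n, c n * (1 - exp (-(a n * x)))) := by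
  have hbound : ∀ n, ∀ x, 0 ≤ x → ‖c n * (1 - exp (-(a n * x)))‖ ≤ |c n| :=
    fun n x hx => norm_mul_one_sub_exp_neg_le _ (mul_nonneg (ha n).le hx)
  have hpos : ∀ x ∈ uIoc s T, 0 ≤ x := fun x hx => hs.trans (uIoc_of_le hsT ▸ hx).1.le
  refine (intervalIntegral.hasSum_integral_of_dominated_convergence (fun n _ => |c n|)
    (fun n => (by fun_prop : Continuous fun x => c n * (1 - exp (-(a n * x)))).aestronglyMeasurable)
    (fun n => .of_forall fun x hx => hbound n x (hpos x hx)) (.of_forall fun _ _ => hc)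
    intervalIntegrable_const
    (.of_forall fun x hx => (hc.of_norm_bounded fun n => hbound n x (hpos x hx)).hasSum)).congr_fun
    fun n => ?_
  rw [intervalIntegral.integral_const_mul, integral_one_sub_exp_neg_mul (ha n).ne']

theorem hasSum_integral_Ioi_tsum_mul_exp_neg_sub [Countable ι] (ha : ∀ n, 0 < a n)
    (hc : Summable fun n => |c n|) {τ : ℝ} (hτ : 0 ≤ τ) :
    HasSum (fun n => c n * ((1 - exp (-(a n * τ))) / a n))
      (∫ x in Ioi τ, ∑' n, c n * (exp (-(a n * (x - τ))) - exp (-(a n * x)))) := by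
  have hnorm : ∀ n x, ‖c n * (exp (-(a n * (x - τ))) - exp (-(a n * x)))‖ =
      |c n| * (exp (-(a n * (x - τ))) - exp (-(a n * x))) := fun n x => by
    rw [norm_mul, Real.norm_eq_abs, Real.norm_eq_abs, abs_of_nonneg (sub_nonneg.mpr
      (exp_le_exp.mpr (by nlinarith [ha n])))]
  have hle : ∀ n, (1 - exp (-(a n * τ))) / a n ≤ τ := fun n => by
    rw [div_le_iff₀ (ha n)]; linarith [one_sub_le_exp_neg (a n * τ)]
  have hnonneg : ∀ n, 0 ≤ (1 - exp (-(a n * τ))) / a n := fun n =>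
    div_nonneg (sub_nonneg.mpr (exp_le_one_iff.mpr (by nlinarith [ha n]))) (ha n).le
  refine (hasSum_integral_of_summable_integral_norm
    (fun n => (integrableOn_exp_neg_mul_sub (ha n) τ).const_mul (c n)) ?_).congr_fun fun n => ?_
  · simp_rw [hnorm, integral_const_mul, integral_Ioi_exp_neg_mul_sub (ha _)]
    exact (hc.mul_right τ).of_nonneg_of_le (fun n => mul_nonneg (abs_nonneg _) (hnonneg n))
      fun n => mul_le_mul_of_nonneg_left (hle n) (abs_nonneg _)
  · rw [integral_const_mul, integral_Ioi_exp_neg_mul_sub (ha n)]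

end Series

lemma intervalIntegral_eq_setIntegral_Ioc_of_eq_zero {f g : ℝ → ℝ} {a T t : ℝ} (hat : a ≤ t)
    (hTt : T ≤ t) (hfg : EqOn f g (Ioc a T)) (hf : ∀ u, T < u → f u = 0) :
    ∫ u in a..t, f u = ∫ u in Ioc a T, g u := by
  rw [intervalIntegral.integral_of_le hat, ← setIntegral_congr_fun measurableSet_Ioc hfg]
  exact setIntegral_eq_of_subset_of_forall_sdiff_eq_zero measurableSet_Ioc
    (Ioc_subset_Ioc_right hTt) fun u hu => hf u (not_le.mp fun h => hu.2 ⟨hu.1.1, h⟩)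

theorem stmt_17_general
    (Dv : ℝ)
    (hDv : 0 < Dv)
    (τ : ℝ)
    (C : ℝ)
    (lam : ℕ → ℝ) (hlam : ∀ n, 0 < lam n)
    (c : ℕ → ℝ)
    (hsum : Summable fun n => |c n|)
    (fc1 : ℝ → ℝ)
    (hfc1 : ∀ t, fc1 t = C * ∑' n, c n * (1 - Real.exp (-(Dv * lam n ^ 2 * t))))
    (fc2 : ℝ → ℝ)
    (hfc2 : ∀ t, fc2 t = C * ∑' n, c n *
          (Real.exp (-(Dv * lam n ^ 2 * (t - τ))) - Real.exp (-(Dv * lam n ^ 2 * t))))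
    (Dσ kd γ w : ℝ) (hDσ : 0 < Dσ) (hkd : 0 < kd) (hγ : 0 < γ)
    (ζ : ℝ) (hζdef : ζ = γ ^ 2 * Dσ - kd)
    (H : ℝ → ℝ)
    (hH : ∀ t, 0 < t → H t = w / Real.sqrt (kd * Dσ) * erf (Real.sqrt (kd * t)) -
          w * γ / ζ * (Real.exp (ζ * t) * erfc (γ * Real.sqrt (Dσ * t)) +
            γ * Real.sqrt (Dσ / kd) * erf (Real.sqrt (kd * t)) - 1))
    (Hinf : ℝ)
    (hHinf : Hinf = w / Real.sqrt (Dσ * kd) - w * γ ^ 2 / ζ * Real.sqrt (Dσ / kd) + w * γ / ζ)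
    (tHat : ℝ) (h1 : 0 < tHat) (h2 : tHat ≤ τ)
    (fhat : ℝ → ℝ)
    (hfa : ∀ u, 0 < u → u ≤ tHat → fhat u = fc1 u)
    (hfb : ∀ u, tHat < u → fhat u = 0) :
    Tendsto (fun t => (∫ u in (0:ℝ)..t, fhat u * H (t - u)) +
        (∫ x in tHat..τ, fc1 x) + ∫ x in Set.Ioi τ, fc2 x) atTop
      (𝓝 (C * ∑' n, c n * ((Hinf - 1) *
        (tHat - (1 - Real.exp (-(Dv * lam n ^ 2 * tHat))) / (Dv * lam n ^ 2)) + τ))) := by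
  have ha (n : ℕ) : 0 < Dv * lam n ^ 2 := by have := hlam n; positivity
  have hH_lim : Tendsto H atTop (𝓝 Hinf) := by
    subst hζdef hHinf
    refine (tendsto_responseH hDσ hkd hγ w).congr' ?_
    filter_upwards [eventually_gt_atTop 0] with t ht using (hH t ht).symm
  have hH_cont : ContinuousOn H (Ioi 0) :=
    (continuous_responseH _ _ _ _ _).continuousOn.congr fun t ht => hH t ht
  have hfc1_int : IntegrableOn fc1 (Ioc 0 tHat) := by
    rw [funext hfc1]
    exact (((continuousOn_tsum_mul_one_sub_exp (fun n => (ha n).le) hsum).mono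
      Icc_subset_Ici_self).integrableOn_Icc.mono_set Ioc_subset_Icc_self).const_mul C
  have hconv : Tendsto (fun t => ∫ u in (0:ℝ)..t, fhat u * H (t - u)) atTop
      (𝓝 ((∫ u in Ioc 0 tHat, fc1 u) * Hinf)) := by
    refine (tendsto_setIntegral_mul_comp_sub measurableSet_Ioc (fun u hu => hu.2)
      hfc1_int hH_cont hH_lim).congr' ?_
    filter_upwards [eventually_ge_atTop tHat] with t ht
    refine (intervalIntegral_eq_setIntegral_Ioc_of_eq_zero (h1.le.trans ht) ht
      (fun u hu => ?_) fun u hu => ?_).symm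
    · simp only [hfa u hu.1 hu.2]
    · simp only [hfb u hu, zero_mul]
  have hS1 := hasSum_intervalIntegral_tsum_mul_one_sub_exp ha hsum le_rfl h1.le
  have hS2 := hasSum_intervalIntegral_tsum_mul_one_sub_exp ha hsum h1.le h2
  have hS3 := hasSum_integral_Ioi_tsum_mul_exp_neg_sub ha hsum (h1.le.trans h2)
  rw [(((hS1.mul_left Hinf).add hS2).add hS3).congr_fun (fun n => ?_) |>.tsum_eq]
  · simp_rw [hfc1, hfc2, intervalIntegral.integral_const_mul, integral_const_mul] at hconv ⊢
    rw [intervalIntegral.integral_of_le h1.le]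
    convert (hconv.add_const _).add_const _ using 2
    ring
  · simp only [mul_zero, neg_zero, exp_zero, sub_zero]
    field_simp
    ring

theorem stmt_17
    (rT kf μ Nv Dv : ℝ)
    (hrT : 0 < rT) (hkf : 0 < kf) (hμ : 0 < μ) (hNv : 0 < Nv) (hDv : 0 < Dv)
    (τ : ℝ) (hτ : τ = Nv / μ)
    (C : ℝ) (hCdef : C = 4 * rT ^ 2 * kf * μ / (Nv * Dv))
    (lam : ℕ → ℝ) (hlam : ∀ n, 0 < lam n)
    (hne : ∀ n, 2 * lam n * rT ≠ Real.sin (2 * lam n * rT))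
    (c : ℕ → ℝ)
    (hc : ∀ n, c n = lam n * (Real.sin (lam n * rT) / (lam n * rT)) /
          (2 * lam n * rT - Real.sin (2 * lam n * rT)))
    (hsum : Summable fun n => |c n|)
    (fc1 : ℝ → ℝ)
    (hfc1 : ∀ t, fc1 t = C * ∑' n, c n * (1 - Real.exp (-(Dv * lam n ^ 2 * t))))
    (fc2 : ℝ → ℝ)
    (hfc2 : ∀ t, fc2 t = C * ∑' n, c n *
          (Real.exp (-(Dv * lam n ^ 2 * (t - τ))) - Real.exp (-(Dv * lam n ^ 2 * t))))
    (Dσ kd γ w : ℝ) (hDσ : 0 < Dσ) (hkd : 0 < kd) (hγ : 0 < γ)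
    (ζ : ℝ) (hζdef : ζ = γ ^ 2 * Dσ - kd) (hζ : ζ ≠ 0)
    (H : ℝ → ℝ)
    (hH : ∀ t, 0 < t → H t = w / Real.sqrt (kd * Dσ) * erf (Real.sqrt (kd * t)) -
          w * γ / ζ * (Real.exp (ζ * t) * erfc (γ * Real.sqrt (Dσ * t)) +
            γ * Real.sqrt (Dσ / kd) * erf (Real.sqrt (kd * t)) - 1))
    (Hinf : ℝ)
    (hHinf : Hinf = w / Real.sqrt (Dσ * kd) - w * γ ^ 2 / ζ * Real.sqrt (Dσ / kd) + w * γ / ζ)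
    (tHat : ℝ) (h1 : 0 < tHat) (h2 : tHat ≤ τ)
    (fhat : ℝ → ℝ)
    (hfa : ∀ u, 0 < u → u ≤ tHat → fhat u = fc1 u)
    (hfb : ∀ u, tHat < u → fhat u = 0) :
    Tendsto (fun t => (∫ u in (0:ℝ)..t, fhat u * H (t - u)) +
        (∫ x in tHat..τ, fc1 x) + ∫ x in Set.Ioi τ, fc2 x) atTop
      (𝓝 (C * ∑' n, c n * ((Hinf - 1) *
        (tHat - (1 - Real.exp (-(Dv * lam n ^ 2 * tHat))) / (Dv * lam n ^ 2)) + τ))) :=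
  stmt_17_general Dv hDv τ C lam hlam c hsum fc1 hfc1 fc2 hfc2 Dσ kd γ w hDσ hkd hγ ζ hζdef H hH
    Hinf hHinf tHat h1 h2 fhat hfa hfb
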